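/- arXiv:1309.3315 — 2 statements merged into one kernel-verified Lean document; each statement's English description precedes it below -/
import Mathlib

section
/- If f ∈ C^1(𝕋^N), then for every t ≥ 0 one has ∫_{𝕋^N} |f − P_t f| dm^N ≤ √t · Σ_{n=1}^N ∫_{𝕋^N} |∂_n f| dm^N. -/
/-!
Averaging over the Gaussian increment `y`, `|f - P_t f|` is at most the `γ_t^{⊗N}`-average
of `|f(· + y) - f|`. Along the segment from `x` to `x + y` the fundamental theorem of calculus
bounds `|f(x + y) - f(x)|` by `∫₀¹ ∑ₙ |yₙ| |∂ₙ f(x + s y)| ds`, and the Haar measure of `𝕋^N`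
is translation invariant, so `∫ |f(· + y) - f| ≤ ∑ₙ |yₙ| ‖∂ₙ f‖₁`. Integrating in `y` leaves
the first absolute moment of `γ_t`, which is at most its standard deviation `√t`.
-/

open MeasureTheory

noncomputable section

/-- The Haar probability measure on the torus `𝕋^N = (ℝ/ℤ)^N`, realized as Lebesgue measure
restricted to the fundamental domain `[0,1)^N`; functions on `𝕋^N` are realized as
`ℤ^N`-periodic functions on `ℝ^N`. -/
def torusMeasure (N : ℕ) : Measure (Fin N → ℝ) :=
  (volume : Measure (Fin N → ℝ)).restrict (Set.univ.pi fun _ => Set.Ico (0:ℝ) 1)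

/-- `f : ℝ^N → ℝ` is `ℤ^N`-periodic, i.e. it descends to a function on `𝕋^N`. -/
def ZPeriodic {N : ℕ} (f : (Fin N → ℝ) → ℝ) : Prop :=
  ∀ (x : Fin N → ℝ) (k : Fin N → ℤ), f (x + fun n => (k n : ℝ)) = f x

/-- The partial derivative `∂ₙ f`. -/
def torusPDeriv {N : ℕ} (n : Fin N) (f : (Fin N → ℝ) → ℝ) (x : Fin N → ℝ) : ℝ :=
  fderiv ℝ f x (Pi.single n 1)

/-- `E_S f`: the conditional expectation of `f` obtained by integrating out the coordinates
outside `S` (with respect to the Haar probability measure on the torus). -/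
def torusCondExp {N : ℕ} (S : Finset (Fin N)) (f : (Fin N → ℝ) → ℝ)
    (x : Fin N → ℝ) : ℝ :=
  ∫ y, f (fun n => if n ∈ S then x n else y n) ∂(torusMeasure N)

/-- The heat semigroup `P_t f (x) = ∫_{ℝ^N} f(x + y) dγ_t^{⊗N}(y)`, where `γ_t` is the centered
Gaussian measure on `ℝ` with variance `t` (for `t = 0` this is `f` itself, since `γ_0 = δ_0`). -/
def heatSemigroup {N : ℕ} (t : ℝ) (f : (Fin N → ℝ) → ℝ) (x : Fin N → ℝ) : ℝ :=
  ∫ y, f (x + y) ∂(Measure.pi fun _ : Fin N => ProbabilityTheory.gaussianReal 0 (Real.toNNReal t))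


open ProbabilityTheory Set

variable {N : ℕ}

instance : IsProbabilityMeasure (torusMeasure N) := by
  constructor
  simp [torusMeasure, volume_pi_pi]

namespace ZPeriodic

variable {g : (Fin N → ℝ) → ℝ}

lemma abs (hg : ZPeriodic g) : ZPeriodic fun x => |g x| := by
  intro x k
  simp only [hg x k]

lemma torusPDeriv (hg : ZPeriodic g) (n : Fin N) : ZPeriodic (torusPDeriv n g) := by
  intro x k
  have hshift : (fun z => g (z + fun m => (k m : ℝ))) = g := funext fun z => hg z k
  rw [_root_.torusPDeriv, _root_.torusPDeriv, ← fderiv_comp_add_right, hshift]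

lemma exists_abs_le (hg : ZPeriodic g) (hc : Continuous g) : ∃ C, ∀ x, |g x| ≤ C := by
  have hrange : range g ⊆ g '' Icc 0 1 := by
    rintro _ ⟨x, rfl⟩
    refine ⟨fun n => Int.fract (x n), ⟨fun n => Int.fract_nonneg _,
      fun n => (Int.fract_lt_one _).le⟩, ?_⟩
    rw [← hg _ fun n => ⌊x n⌋]
    congr 1
    funext n
    exact Int.fract_add_floor (x n)
  obtain ⟨C, hC⟩ := isBounded_iff_forall_norm_le.1
    ((isCompact_Icc.image hc).isBounded.subset hrange)
  exact ⟨C, fun x => hC _ (mem_range_self x)⟩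

lemma integrable (hg : ZPeriodic g) (hc : Continuous g) (μ : Measure (Fin N → ℝ))
    [IsFiniteMeasure μ] : Integrable g μ := by
  obtain ⟨C, hC⟩ := hg.exists_abs_le hc
  exact .of_bound hc.aestronglyMeasurable C (ae_of_all _ hC)

lemma integral_add_right (hg : ZPeriodic g) (y : Fin N → ℝ) :
    ∫ x, g (x + y) ∂torusMeasure N = ∫ x, g x ∂torusMeasure N := by
  let L := (Submodule.span ℤ (range (Pi.basisFun ℝ (Fin N)))).toAddSubgroup
  have : Countable L := inferInstanceAs (Countable (Submodule.span ℤ _))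
  have hD : IsAddFundamentalDomain L (univ.pi fun _ : Fin N => Ico (0 : ℝ) 1) volume := by
    simpa [ZSpan.fundamentalDomain_pi_basisFun] using
      ZSpan.isAddFundamentalDomain' (Pi.basisFun ℝ (Fin N)) (volume : Measure (Fin N → ℝ))
  have hD' : IsAddFundamentalDomain L ((· + y) '' univ.pi fun _ : Fin N => Ico (0 : ℝ) 1)
      volume :=
    hD.image_of_equiv (Equiv.addRight y)
      (measurePreserving_add_right volume (-y)).quasiMeasurePreserving (Equiv.refl L)
      fun l x => add_assoc (l : Fin N → ℝ) x y
  have hinv : ∀ (l : L) x, g (l +ᵥ x) = g x := by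
    rintro ⟨l, hl⟩ x
    obtain ⟨k, hk⟩ := Classical.skolem.1 <| by
      simpa using ((Pi.basisFun ℝ (Fin N)).mem_span_iff_repr_mem ℤ l).1 hl
    have hl : l = fun n => (k n : ℝ) := funext fun n => (hk n).symm
    subst hl
    exact (congrArg g (add_comm _ x)).trans (hg x k)
  rw [torusMeasure, ← (measurePreserving_add_right volume y).setIntegral_image_emb
    (measurableEmbedding_addRight y), hD'.setIntegral_eq hD hinv]

end ZPeriodic

lemma abs_sub_le_integral_abs_fderiv {E : Type*} [NormedAddCommGroup E] [NormedSpace ℝ E]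
    {f : E → ℝ} (hf : ContDiff ℝ 1 f) (x y : E) :
    |f (x + y) - f x| ≤ ∫ s in (0 : ℝ)..1, |fderiv ℝ f (x + s • y) y| := by
  have hline : ∀ s : ℝ,
      HasDerivAt (fun s : ℝ => f (x + s • y)) (fderiv ℝ f (x + s • y) y) s :=
    fun s => ((hf.differentiable one_ne_zero _).hasFDerivAt).comp_hasDerivAt s
      (((hasDerivAt_id s).smul_const y).const_add x |>.congr_deriv (one_smul ℝ y))
  have hcont : Continuous fun s : ℝ => fderiv ℝ f (x + s • y) y := by fun_prop
  calc |f (x + y) - f x|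
      = |∫ s in (0 : ℝ)..1, fderiv ℝ f (x + s • y) y| := by
        rw [intervalIntegral.integral_eq_sub_of_hasDerivAt (fun s _ => hline s)
          (hcont.intervalIntegrable 0 1)]
        simp
    _ ≤ ∫ s in (0 : ℝ)..1, |fderiv ℝ f (x + s • y) y| :=
        intervalIntegral.abs_integral_le_integral_abs zero_le_one

lemma abs_apply_le_sum_abs_mul {ι : Type*} [Fintype ι] [DecidableEq ι]
    (L : (ι → ℝ) →L[ℝ] ℝ) (y : ι → ℝ) :
    |L y| ≤ ∑ n, |y n| * |L (Pi.single n 1)| := by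
  have hexpand : L y = ∑ n, y n * L (Pi.single n 1) := by
    conv_lhs => rw [← Finset.univ_sum_single y]
    refine (map_sum L _ _).trans (Finset.sum_congr rfl fun n _ => ?_)
    rw [← smul_eq_mul, ← L.map_smul, ← Pi.single_smul', smul_eq_mul, mul_one]
  rw [hexpand]
  refine (Finset.abs_sum_le_sum_abs _ _).trans_eq ?_
  simp [abs_mul]

lemma continuous_torusPDeriv {f : (Fin N → ℝ) → ℝ} (hf : ContDiff ℝ 1 f) (n : Fin N) :
    Continuous (torusPDeriv n f) :=
  (hf.continuous_fderiv one_ne_zero).clm_apply continuous_const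

lemma integral_abs_sub_add_le {f : (Fin N → ℝ) → ℝ} (hf : ContDiff ℝ 1 f)
    (hper : ZPeriodic f) (y : Fin N → ℝ) :
    ∫ x, |f (x + y) - f x| ∂torusMeasure N ≤
      ∑ n, |y n| * ∫ x, |torusPDeriv n f x| ∂torusMeasure N := by
  let g : (Fin N → ℝ) → ℝ := fun z => ∑ n, |y n| * |torusPDeriv n f z|
  have hDcont := continuous_torusPDeriv hf
  have hgcont : Continuous g := by fun_prop
  have hgper : ZPeriodic g := fun z k => by simp only [g, (hper.torusPDeriv _).abs z k]
  obtain ⟨C, hC⟩ := hgper.exists_abs_le hgcont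
  let ν := (volume : Measure ℝ).restrict (Ioc 0 1)
  have hpath : ∀ x, |f (x + y) - f x| ≤ ∫ s, g (x + s • y) ∂ν := fun x => by
    refine (abs_sub_le_integral_abs_fderiv hf x y).trans ?_
    rw [← intervalIntegral.integral_of_le zero_le_one]
    have hDf : Continuous fun s : ℝ => fderiv ℝ f (x + s • y) :=
      (hf.continuous_fderiv one_ne_zero).comp (by fun_prop)
    exact intervalIntegral.integral_mono_on zero_le_one
      ((hDf.clm_apply continuous_const).abs.intervalIntegrable 0 1)
      ((hgcont.comp (by fun_prop)).intervalIntegrable 0 1)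
      fun s _ => abs_apply_le_sum_abs_mul _ y
  have hint : Integrable (fun p : (Fin N → ℝ) × ℝ => g (p.1 + p.2 • y))
      ((torusMeasure N).prod ν) :=
    .of_bound (by fun_prop) C (ae_of_all _ fun p => hC _)
  calc ∫ x, |f (x + y) - f x| ∂torusMeasure N
      ≤ ∫ x, ∫ s, g (x + s • y) ∂ν ∂torusMeasure N :=
        integral_mono_of_nonneg (ae_of_all _ fun _ => abs_nonneg _) hint.integral_prod_left
          (ae_of_all _ hpath)
    _ = ∫ s, ∫ x, g (x + s • y) ∂torusMeasure N ∂ν := integral_integral_swap hint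
    _ = ∫ x, g x ∂torusMeasure N := by
        simp [hgper.integral_add_right, ν]
    _ = ∑ n, |y n| * ∫ x, |torusPDeriv n f x| ∂torusMeasure N := by
        rw [integral_finsetSum _ fun n _ =>
          (((hper.torusPDeriv n).abs.integrable (hDcont n).abs _).const_mul _)]
        simp only [integral_const_mul]

section Probability

variable {Ω : Type*} [MeasurableSpace Ω] {μ : Measure Ω} [IsProbabilityMeasure μ]

lemma abs_sub_integral_le_integral_abs_sub {h : Ω → ℝ} (hh : Integrable h μ) (c : ℝ) :
    |c - ∫ ω, h ω ∂μ| ≤ ∫ ω, |h ω - c| ∂μ := by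
  have hc : c - ∫ ω, h ω ∂μ = ∫ ω, (c - h ω) ∂μ := by
    rw [integral_sub (integrable_const c) hh, integral_const, probReal_univ, one_smul]
  rw [hc]
  exact abs_integral_le_integral_abs.trans_eq
    (integral_congr_ae (ae_of_all _ fun ω => abs_sub_comm _ _))

lemma integral_abs_le_sqrt_integral_sq {X : Ω → ℝ} (hX : MemLp X 2 μ) :
    ∫ ω, |X ω| ∂μ ≤ √(∫ ω, X ω ^ 2 ∂μ) := by
  have hvar := variance_nonneg |X| μ
  rw [variance_eq_sub hX.abs] at hvar
  refine (le_abs_self _).trans (Real.abs_le_sqrt ?_)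
  simpa [sq_abs] using hvar

end Probability

lemma integral_abs_gaussianReal_le (v : NNReal) : ∫ x, |x| ∂gaussianReal 0 v ≤ √v := by
  have hsq : ∫ x, x ^ 2 ∂gaussianReal 0 v = v := by
    rw [← variance_id_gaussianReal (μ := 0),
      variance_of_integral_eq_zero aemeasurable_id integral_id_gaussianReal]
    rfl
  simpa [hsq] using integral_abs_le_sqrt_integral_sq (memLp_id_gaussianReal (μ := 0) (v := v) 2)

section ProductMeasure

variable {ι : Type*} [Fintype ι] {μ : Measure ℝ} [IsProbabilityMeasure μ]

lemma integrable_abs_eval_pi (hμ : Integrable id μ) (i : ι) :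
    Integrable (fun y : ι → ℝ => |y i|) (Measure.pi fun _ => μ) :=
  (measurePreserving_eval (fun _ => μ) i).integrable_comp_of_integrable hμ.abs

lemma integrable_sum_abs_mul_pi (hμ : Integrable id μ) (c : ι → ℝ) :
    Integrable (fun y : ι → ℝ => ∑ i, |y i| * c i) (Measure.pi fun _ => μ) :=
  integrable_finsetSum _ fun i _ => (integrable_abs_eval_pi hμ i).mul_const _

lemma integral_sum_abs_mul_pi (hμ : Integrable id μ) (c : ι → ℝ) :
    ∫ y : ι → ℝ, ∑ i, |y i| * c i ∂(Measure.pi fun _ => μ) =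
      (∫ u, |u| ∂μ) * ∑ i, c i := by
  rw [integral_finsetSum _ fun i _ => (integrable_abs_eval_pi hμ i).mul_const _, Finset.mul_sum]
  refine Finset.sum_congr rfl fun i _ => ?_
  have hmarginal := integral_map (μ := Measure.pi fun _ : ι => μ)
    (measurable_pi_apply i).aemeasurable (f := fun u => |u|) continuous_abs.aestronglyMeasurable
  rw [(measurePreserving_eval (fun _ => μ) i).map_eq] at hmarginal
  rw [integral_mul_const, hmarginal]

end ProductMeasure

lemma integral_abs_sub_heatSemigroup_le {f : (Fin N → ℝ) → ℝ} (hf : Continuous f)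
    (hper : ZPeriodic f) (t : ℝ) :
    ∫ x, |f x - heatSemigroup t f x| ∂torusMeasure N ≤
      ∫ y, ∫ x, |f (x + y) - f x| ∂torusMeasure N
        ∂(Measure.pi fun _ : Fin N => gaussianReal 0 t.toNNReal) := by
  obtain ⟨C, hC⟩ := hper.exists_abs_le hf
  have hint : Integrable (fun p : (Fin N → ℝ) × (Fin N → ℝ) => |f (p.1 + p.2) - f p.1|)
      ((torusMeasure N).prod (Measure.pi fun _ => gaussianReal 0 t.toNNReal)) :=
    .of_bound (by fun_prop) (C + C) (ae_of_all _ fun p => by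
      simpa using (abs_sub _ _).trans (add_le_add (hC _) (hC _)))
  refine (integral_mono_of_nonneg (ae_of_all _ fun _ => abs_nonneg _) hint.integral_prod_left
    (ae_of_all _ fun x => ?_)).trans_eq (integral_integral_swap hint)
  exact abs_sub_integral_le_integral_abs_sub
    (.of_bound (by fun_prop) C (ae_of_all _ fun y => hC (x + y))) (f x)

/-- **Lemma 5.** If `f ∈ C¹(𝕋^N)`, then `‖f - P_t f‖₁ ≤ √t · ‖∂⃗f‖_{L₁ℓ₁^N}` for all `t ≥ 0`. -/
theorem stmt6 (N : ℕ) (f : (Fin N → ℝ) → ℝ) (hf : ContDiff ℝ 1 f) (hper : ZPeriodic f)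
    (t : ℝ) (ht : 0 ≤ t) :
    (∫ x, |f x - heatSemigroup t f x| ∂(torusMeasure N)) ≤
      Real.sqrt t * ∑ n, ∫ x, |torusPDeriv n f x| ∂(torusMeasure N) := by
  set I := fun n => ∫ x, |torusPDeriv n f x| ∂torusMeasure N
  have hγ : Integrable id (gaussianReal 0 t.toNNReal) :=
    memLp_one_iff_integrable.1 (memLp_id_gaussianReal 1)
  calc ∫ x, |f x - heatSemigroup t f x| ∂torusMeasure N
      ≤ ∫ y, ∫ x, |f (x + y) - f x| ∂torusMeasure N
          ∂(Measure.pi fun _ : Fin N => gaussianReal 0 t.toNNReal) :=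
        integral_abs_sub_heatSemigroup_le hf.continuous hper t
    _ ≤ ∫ y, ∑ n, |y n| * I n ∂(Measure.pi fun _ : Fin N => gaussianReal 0 t.toNNReal) :=
        integral_mono_of_nonneg (ae_of_all _ fun _ => integral_nonneg fun _ => abs_nonneg _)
          (integrable_sum_abs_mul_pi hγ I) (ae_of_all _ (integral_abs_sub_add_le hf hper))
    _ = (∫ u, |u| ∂gaussianReal 0 t.toNNReal) * ∑ n, I n := integral_sum_abs_mul_pi hγ I
    _ ≤ √t * ∑ n, I n := by
        gcongr
        simpa [ht] using integral_abs_gaussianReal_le t.toNNReal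
end
end

section
/- Let (X,d) be a compact metric space and f : X → ℝ a continuous function with non-decreasing modulus of continuity ω, i.e. |f(x) − f(y)| ≤ ω(d(x,y)) for all x,y, with ω non-decreasing. Let ε > 0, let K_1 := sup_{r ≥ ε} ω(r)/r ∈ [0,∞], and let K := max{K_1, 1}. If K is finite, then there is a K-Lipschitz function h : X → ℝ such that sup_{x∈X} |f(x) − h(x)| ≤ Kε. -/
open MeasureTheory ENNReal

noncomputable section

/-- **Lemma 11.** Let `(X,d)` be a compact metric space and `f : X → ℝ` continuous with
non-decreasing modulus of continuity `ω`.  Let `ε > 0`, `K₁ := sup_{r ≥ ε} ω(r)/r ∈ [0,∞]`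
and `K := max {K₁, 1}`.  If `K` is finite, then there is a `K`-Lipschitz `h : X → ℝ` with
`‖f - h‖_∞ ≤ Kε`. -/
theorem stmt11 {X : Type*} [MetricSpace X] [CompactSpace X]
    (f : X → ℝ) (hf : Continuous f)
    (ω : ℝ → ℝ≥0∞) (hω : Monotone ω)
    (hmod : ∀ x y : X, ENNReal.ofReal |f x - f y| ≤ ω (dist x y))
    (ε : ℝ) (hε : 0 < ε)
    (K : ℝ≥0∞)
    (hK : K = max (⨆ r : {r : ℝ // ε ≤ r}, ω r.1 / ENNReal.ofReal r.1) 1)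
    (hKfin : K ≠ ∞) :
    ∃ h : X → ℝ, LipschitzWith K.toNNReal h ∧ ∀ x : X, |f x - h x| ≤ K.toReal * ε := by
  rcases isEmpty_or_nonempty X with hX | hX
  · exact ⟨f, fun x => isEmptyElim x, fun x => isEmptyElim x⟩
  set k : ℝ := K.toReal with hk
  have hk1 : (1 : ℝ) ≤ k := by
    rw [hk]
    have : (1 : ℝ≥0∞) ≤ K := hK ▸ le_max_right _ _
    have := ENNReal.toReal_mono hKfin this
    simpa using this
  have hk0 : (0 : ℝ) ≤ k := le_trans zero_le_one hk1
  -- key: for ε ≤ r, ω r ≤ K * ofReal r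
  have hωr : ∀ r : ℝ, ε ≤ r → ω r ≤ K * ENNReal.ofReal r := by
    intro r hr
    have hrpos : 0 < r := lt_of_lt_of_le hε hr
    have hle : ω r / ENNReal.ofReal r ≤ K := by
      rw [hK]
      exact le_trans (le_iSup (fun s : {r : ℝ // ε ≤ r} => ω s.1 / ENNReal.ofReal s.1)
        ⟨r, hr⟩) (le_max_left _ _)
    rwa [ENNReal.div_le_iff_le_mul (Or.inl (by simp [hrpos])) (Or.inl ENNReal.ofReal_ne_top)] at hle
  -- translate to real estimates
  have hreal : ∀ x y : X, ε ≤ dist x y → |f x - f y| ≤ k * dist x y := by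
    intro x y hd
    have h1 : ENNReal.ofReal |f x - f y| ≤ K * ENNReal.ofReal (dist x y) :=
      le_trans (hmod x y) (hωr _ hd)
    have h2 := ENNReal.toReal_mono (by finiteness) h1
    rwa [ENNReal.toReal_ofReal (abs_nonneg _), ENNReal.toReal_mul,
      ENNReal.toReal_ofReal dist_nonneg] at h2
  have hsmall : ∀ x y : X, dist x y ≤ ε → |f x - f y| ≤ k * ε := by
    intro x y hd
    have h1 : ENNReal.ofReal |f x - f y| ≤ K * ENNReal.ofReal ε :=
      le_trans (hmod x y) (le_trans (hω hd) (hωr ε le_rfl))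
    have h2 := ENNReal.toReal_mono (by finiteness) h1
    rwa [ENNReal.toReal_ofReal (abs_nonneg _), ENNReal.toReal_mul,
      ENNReal.toReal_ofReal hε.le] at h2
  obtain ⟨z, -, hz'⟩ := isCompact_univ.exists_isMinOn Set.univ_nonempty hf.continuousOn
  have hz : ∀ y : X, f z ≤ f y := fun y => hz' (Set.mem_univ y)
  set h : X → ℝ := fun x => ⨅ y, (f y + k * dist x y) with hh
  have hbdd : ∀ x : X, BddBelow (Set.range fun y => f y + k * dist x y) := by
    intro x
    refine ⟨f z, ?_⟩
    rintro _ ⟨y, rfl⟩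
    dsimp only
    have := mul_nonneg hk0 (dist_nonneg (x := x) (y := y))
    linarith [hz y]
  have hle : ∀ x : X, h x ≤ f x := by
    intro x
    have := ciInf_le (hbdd x) x
    simpa using this
  have hlip : ∀ x x' : X, h x ≤ h x' + k * dist x x' := by
    intro x x'
    rw [hh]
    have : (⨅ y, (f y + k * dist x' y)) + k * dist x x'
        = ⨅ y, (f y + k * dist x' y + k * dist x x') := by
      rw [← ciInf_add (hbdd x')]
    rw [this]
    refine le_ciInf fun y => ?_
    refine le_trans (ciInf_le (hbdd x) y) ?_
    have : dist x y ≤ dist x' y + dist x x' := by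
      rw [dist_comm x' y, dist_comm x y]
      exact dist_triangle y x' x |>.trans (by rw [dist_comm x' x] )
    nlinarith [mul_le_mul_of_nonneg_left this hk0]
  refine ⟨h, ?_, ?_⟩
  · apply LipschitzWith.of_dist_le_mul
    intro x y
    have hc : (K.toNNReal : ℝ) = k := rfl
    rw [Real.dist_eq, hc]
    rw [abs_sub_le_iff]
    constructor
    · have := hlip x y; linarith
    · have := hlip y x; rw [dist_comm]; linarith
  · intro x
    have hge : f x - k * ε ≤ h x := by
      refine le_ciInf fun y => ?_
      rcases le_total (dist x y) ε with hd | hd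
      · have := hsmall x y hd
        have hnn := mul_nonneg hk0 (dist_nonneg (x := x) (y := y))
        have := abs_le.1 this
        linarith [this.2]
      · have := (abs_le.1 (hreal x y hd)).2
        have hnn := mul_nonneg hk0 hε.le
        linarith
    have := hle x
    rw [abs_le]
    constructor <;> [linarith [mul_nonneg hk0 hε.le]; linarith]
end
end
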